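/- Correctness of compilation, constructor calls: let C be the i-th constructor of a type T with c constructors, and let p_1,…,p_n be expressions that are compiled correctly. Then the constructor application C(p_1,…,p_n) is compiled correctly, i.e. for every abstract environment e and assignment σ, decode_T(avalue(e, compile(C(p_1,…,p_n))), σ) = cvalue(decode(e,σ), C(p_1,…,p_n)). -/

import Mathlib

/-- Abstract values over propositional variables `V`: a list of (semantic) formulas
(the *flags*) together with a list of abstract values (the *arguments*). -/
inductive AVal (V : Type) : Type where
  | mk : List ((V → Bool) → Bool) → List (AVal V) → AVal V

/-- The flags of an abstract value. -/
def AVal.flags {V : Type} : AVal V → List ((V → Bool) → Bool)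
  | .mk f _ => f

/-- The arguments of an abstract value. -/
def AVal.args {V : Type} : AVal V → List (AVal V)
  | .mk _ a => a

/-- A signature: every type symbol `T` gets a nonempty finite list of constructors,
each given by its finite list of argument type symbols. -/
structure Signature (τ : Type) where
  ctors : τ → List (List τ)
  ctors_ne : ∀ T, ctors T ≠ []

/-- Untyped data terms; the first component is the (1-based) rank of the
constructor. -/
inductive Value : Type where
  | mk : ℕ → List Value → Value

/-- Well-typed concrete values of type `T`: `C_i(v_1, …, v_n)` where `C_i` is the
`i`-th constructor of `T` with argument types `T_1, …, T_n` and each `v_j` is a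
well-typed value of type `T_j`. -/
inductive WT {τ : Type} (sig : Signature τ) : τ → Value → Prop where
  | mk {T : τ} {i : ℕ} {argTys : List τ} {vals : List Value} :
      1 ≤ i → (sig.ctors T)[i - 1]? = some argTys →
      List.Forall₂ (WT sig) argTys vals → WT sig T (.mk i vals)

/-- `numeric n w = some i` iff `w` has a (unique) prefix `u ∈ S n` of lexicographic
rank `i` in `S n`; extra bits beyond the prefix are ignored. -/
def numeric : ℕ → List Bool → Option ℕ
  | 0, _ => none
  | 1, _ => some 1
  | _ + 2, [] => none
  | n + 2, false :: w => numeric ((n + 2 + 1) / 2) w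
  | n + 2, true :: w => (numeric ((n + 2) / 2) w).map (fun i => (n + 2 + 1) / 2 + i)
termination_by n _ => n
decreasing_by all_goals omega

/-- `strOf n i` is the element of `S n` of lexicographic rank `i` (for `1 ≤ i ≤ n`). -/
def strOf : ℕ → ℕ → List Bool
  | 0, _ => []
  | 1, _ => []
  | n + 2, i =>
      if i ≤ (n + 2 + 1) / 2 then false :: strOf ((n + 2 + 1) / 2) i
      else true :: strOf ((n + 2) / 2) (i - (n + 2 + 1) / 2)
termination_by n _ => n
decreasing_by all_goals omega
mutual
  /-- Encoding of a concrete value of type `T` as an abstract value: the flags are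
  constant formulas representing the rank-`i` element of `S c(T)`, and the arguments
  are the encodings of the constructor arguments at their respective types. -/
  def encode {V τ : Type} (sig : Signature τ) : τ → Value → AVal V
    | T, .mk i vals =>
        .mk ((strOf (sig.ctors T).length i).map (fun b => fun _ => b))
          (encodeList sig ((sig.ctors T).getD (i - 1) []) vals)
  termination_by _ v => sizeOf v

  /-- Pointwise encoding of a list of values at a list of types. -/
  def encodeList {V τ : Type} (sig : Signature τ) : List τ → List Value → List (AVal V)
    | t :: ts, v :: vs => encode sig t v :: encodeList sig ts vs
    | _, _ => []
  termination_by _ vs => sizeOf vs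
end

mutual
  /-- Decoding of an abstract value at type `T` under an assignment `σ` (a partial
  function): the flags are evaluated under `σ`; if the resulting bit string has a
  prefix in `S c(T)` determining constructor rank `i` of `T`, and there are enough
  arguments, the first arguments are decoded at the argument types of the `i`-th
  constructor of `T`; otherwise decoding is undefined. -/
  def decode {V τ : Type} (sig : Signature τ) : τ → AVal V → (V → Bool) → Option Value
    | T, .mk flags args, σ =>
        match numeric (sig.ctors T).length (flags.map (fun f => f σ)) with
        | none => none
        | some i =>
            match (sig.ctors T)[i - 1]? with
            | none => none
            | some argTys =>
                if argTys.length ≤ args.length then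
                  (decodeList sig argTys args σ).map (Value.mk i)
                else none
  termination_by _ a _ => sizeOf a

  /-- Pointwise decoding of (a prefix of) a list of abstract values at a list of
  types. -/
  def decodeList {V τ : Type} (sig : Signature τ) :
      List τ → List (AVal V) → (V → Bool) → Option (List Value)
    | [], _, _ => some []
    | _ :: _, [], _ => none
    | t :: ts, a :: as, σ =>
        match decode sig t a σ with
        | none => none
        | some v => (decodeList sig ts as σ).map (fun vs => v :: vs)
  termination_by _ as _ => sizeOf as
end
lemma AVal.one_le_sizeOf_list {V : Type} (l : List (AVal V)) : 1 ≤ sizeOf l := by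
  cases l <;> simp <;> omega

lemma AVal.sizeOf_getD_le {V : Type} (a : AVal V) (j : ℕ) :
    sizeOf (a.args.getD j (AVal.mk [] [])) ≤ sizeOf a := by
  cases a with
  | mk f args =>
      simp only [AVal.args]
      by_cases h : j < args.length
      · have hm : args.getD j (AVal.mk [] []) ∈ args := by
          rw [List.getD_eq_getElem _ _ h]; exact List.getElem_mem h
        have := List.sizeOf_lt_of_mem hm
        simp only [AVal.mk.sizeOf_spec]
        have := AVal.one_le_sizeOf_list (V := V) []
        omega
      · rw [List.getD_eq_default _ _ (by omega)]
        simp only [AVal.mk.sizeOf_spec]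
        have h1 : 1 ≤ sizeOf f := by cases f <;> simp <;> omega
        have h2 := AVal.one_le_sizeOf_list args
        have h3 := AVal.one_le_sizeOf_list (V := V) []
        simp at h3 ⊢
        omega

lemma AVal.sizeOf_getD_lt {V : Type} (a : AVal V) (j : ℕ) (h : j < a.args.length) :
    sizeOf (a.args.getD j (AVal.mk [] [])) < sizeOf a := by
  cases a with
  | mk f args =>
      simp only [AVal.args] at h ⊢
      have hm : args.getD j (AVal.mk [] []) ∈ args := by
        rw [List.getD_eq_getElem _ _ h]; exact List.getElem_mem h
      have := List.sizeOf_lt_of_mem hm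
      simp only [AVal.mk.sizeOf_spec]
      omega

lemma merge_dec {V : Type} (as : List (AVal V)) (j : ℕ)
    (hj : j < (as.map (fun a => a.args.length)).foldr max 0) :
    sizeOf (as.map (fun a => a.args.getD j (AVal.mk [] []))) < sizeOf as := by
  induction as with
  | nil => simp at hj
  | cons a as ih =>
      simp only [List.map_cons, List.foldr_cons] at hj
      simp only [List.map_cons, List.cons.sizeOf_spec]
      rcases Nat.lt_or_ge j a.args.length with h | h
      · have h1 := AVal.sizeOf_getD_lt a j h
        have h2 : sizeOf (as.map (fun a => a.args.getD j (AVal.mk [] []))) ≤ sizeOf as := by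
          rcases Nat.lt_or_ge j ((as.map (fun a => a.args.length)).foldr max 0) with h' | h'
          · exact Nat.le_of_lt (ih h')
          · clear ih hj; induction as with
            | nil => simp
            | cons b bs ihb =>
                simp only [List.map_cons, List.foldr_cons] at h' ⊢
                simp only [List.cons.sizeOf_spec]
                have := AVal.sizeOf_getD_le b j
                have := ihb (by omega)
                omega
        omega
      · have hj' : j < (as.map (fun a => a.args.length)).foldr max 0 := by omega
        have := ih hj'
        have := AVal.sizeOf_getD_le a j
        omega

/-- The combining function `merge c f⃗ [a_1, …, a_c]`: its `i`-th flag is the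
conjunction over `k` of the implications `numeric c f⃗ = k ⟹ flags_i(a_k)`, and its
`j`-th argument is `merge c f⃗` of the `j`-th arguments of the `a_k` (a missing
argument being the empty abstract value). -/
def merge {V : Type} (c : ℕ) (fs : List ((V → Bool) → Bool)) (as : List (AVal V)) :
    AVal V :=
  AVal.mk
    ((List.range ((as.map (fun a => a.flags.length)).foldr max 0)).map
      (fun i => fun σ =>
        match numeric c (fs.map (fun f => f σ)) with
        | none => true
        | some k =>
            match as[k - 1]? with
            | none => true
            | some a =>
                match a.flags[i]? with
                | none => true
                | some g => g σ))
    ((List.range ((as.map (fun a => a.args.length)).foldr max 0)).attach.map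
      (fun j => merge c fs (as.map (fun a => a.args.getD j.1 (AVal.mk [] [])))))
termination_by sizeOf as
decreasing_by
  have h := merge_dec as j.1 (by simpa using j.2)
  simpa only [List.map_attach_eq_pmap, List.pmap_eq_map] using h

/-- Expressions of the input language: variables, local bindings, calls of globally
defined functions, constructor applications (the constructor given by its type symbol
and its 1-based rank), and complete pattern matches (one branch, consisting of the
pattern variables and the branch body, per constructor of the discriminant's type). -/
inductive Expr (τ Name FName : Type) : Type where
  | var : Name → Expr τ Name FName
  | lett : Name → Expr τ Name FName → Expr τ Name FName → Expr τ Name FName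
  | call : FName → List (Expr τ Name FName) → Expr τ Name FName
  | con : τ → ℕ → List (Expr τ Name FName) → Expr τ Name FName
  | cases : τ → Expr τ Name FName → List (List Name × Expr τ Name FName) →
      Expr τ Name FName

/-- Expressions of the abstract (compiled) language: variables, local bindings,
calls, abstract constructor applications `C'` (given the number `c` of constructors
of the type and the rank `i` of the constructor), and the compiled form of pattern
matches: `amerge c d bs` evaluates `d` to an abstract value `x`, evaluates each
branch body with the pattern variables bound to the arguments of `x`, and merges the
results according to the flags of `x`. -/
inductive AExpr (Name FName V : Type) : Type where
  | var : Name → AExpr Name FName V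
  | lett : Name → AExpr Name FName V → AExpr Name FName V → AExpr Name FName V
  | call : FName → List (AExpr Name FName V) → AExpr Name FName V
  | mkCon : ℕ → ℕ → List (AExpr Name FName V) → AExpr Name FName V
  | amerge : ℕ → AExpr Name FName V → List (List Name × AExpr Name FName V) →
      AExpr Name FName V

lemma sizeOf_snd_lt_of_mem {Name E : Type} [SizeOf Name] [SizeOf E]
    {bs : List (List Name × E)} {b : List Name × E} (h : b ∈ bs) :
    sizeOf b.2 < sizeOf bs := by
  have h1 := List.sizeOf_lt_of_mem h
  obtain ⟨vs, body⟩ := b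
  simp at h1 ⊢
  omega

/-- Compilation of input expressions to abstract expressions. -/
def compile {τ Name FName V : Type} (sig : Signature τ) :
    Expr τ Name FName → AExpr Name FName V
  | .var x => .var x
  | .lett x a b => .lett x (compile sig a) (compile sig b)
  | .call f as => .call f (as.attach.map (fun e => compile sig e.1))
  | .con T i as => .mkCon (sig.ctors T).length i (as.attach.map (fun e => compile sig e.1))
  | .cases T d bs =>
      .amerge (sig.ctors T).length (compile sig d)
        (bs.attach.map (fun b => (b.1.1, compile sig b.1.2)))
termination_by e => sizeOf e
decreasing_by
  all_goals simp only [Expr.lett.sizeOf_spec, Expr.call.sizeOf_spec,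
    Expr.con.sizeOf_spec, Expr.cases.sizeOf_spec]
  · omega
  · omega
  · have h := List.sizeOf_lt_of_mem e.2; omega
  · have h := List.sizeOf_lt_of_mem e.2; omega
  · omega
  · have h := sizeOf_snd_lt_of_mem b.2; omega

/-- `updEnv env x v` updates the environment `env` at `x` by `v`. -/
def updEnv {Name β : Type} [DecidableEq Name] (env : Name → Option β) (x : Name)
    (v : β) : Name → Option β :=
  fun y => if y = x then some v else env y

/-- The environment binding a list of names pointwise to a list of values
(and nothing else). -/
def bindEnv {Name β : Type} [DecidableEq Name] : List Name → List β → Name → Option β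
  | p :: ps, v :: vs, y => if y = p then some v else bindEnv ps vs y
  | _, _, _ => none

/-- `extEnv vs ws env` extends `env` by binding the names `vs` pointwise
to the values `ws`. -/
def extEnv {Name β : Type} [DecidableEq Name] (vs : List Name) (ws : List β)
    (env : Name → Option β) : Name → Option β :=
  fun y => match bindEnv vs ws y with
    | some v => some v
    | none => env y

/- Strict (call-by-value) big-step evaluation of input expressions with respect to a
program `prog` assigning to (some) function names their formal parameters and body.
In a pattern match, the branch corresponding to the constructor of the discriminant's
value is chosen, with the pattern variables bound to the constructor arguments.
`CEvalList` is the pointwise lifting of `CEval` to lists of expressions. -/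
mutual
  /-- Big-step evaluation of input expressions. -/
  inductive CEval {τ Name FName : Type} [DecidableEq Name]
      (prog : FName → Option (List Name × Expr τ Name FName)) :
      (Name → Option Value) → Expr τ Name FName → Value → Prop where
    | var {env x v} : env x = some v → CEval prog env (.var x) v
    | lett {env x a b u v} : CEval prog env a u →
        CEval prog (updEnv env x u) b v → CEval prog env (.lett x a b) v
    | call {env f args params body vals v} : prog f = some (params, body) →
        CEvalList prog env args vals →
        CEval prog (bindEnv params vals) body v →
        CEval prog env (.call f args) v
    | con {env T i args vals} : CEvalList prog env args vals →
        CEval prog env (.con T i args) (.mk i vals)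
    | cases {env T d bs i ws pvs body v} : CEval prog env d (.mk i ws) →
        bs[i - 1]? = some (pvs, body) →
        CEval prog (extEnv pvs ws env) body v →
        CEval prog env (.cases T d bs) v

  /-- Pointwise lifting of `CEval` to lists. -/
  inductive CEvalList {τ Name FName : Type} [DecidableEq Name]
      (prog : FName → Option (List Name × Expr τ Name FName)) :
      (Name → Option Value) → List (Expr τ Name FName) → List Value → Prop where
    | nil {env} : CEvalList prog env [] []
    | cons {env e v es vs} : CEval prog env e v → CEvalList prog env es vs →
        CEvalList prog env (e :: es) (v :: vs)
end

/- Strict big-step evaluation of abstract expressions with respect to an abstract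
program `aprog`.  An abstract constructor application `C'` builds the abstract value
with the constant flags representing the rank-`i` element of `S c` and the values of
the arguments; `amerge` evaluates the discriminant to `x`, each branch body with the
pattern variables bound to the arguments of `x` (a missing argument being the empty
abstract value), and merges the branch results according to the flags of `x`.
`AEvalList` is the pointwise lifting of `AEval` to lists, and
`AEvalBranches aprog env x bs rs` evaluates the branch bodies `bs` (each with its
pattern variables bound to the arguments of `x`) to the abstract values `rs`. -/
mutual
  /-- Big-step evaluation of abstract expressions. -/
  inductive AEval {Name FName V : Type} [DecidableEq Name]
      (aprog : FName → Option (List Name × AExpr Name FName V)) :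
      (Name → Option (AVal V)) → AExpr Name FName V → AVal V → Prop where
    | var {env x a} : env x = some a → AEval aprog env (.var x) a
    | lett {env x a b u w} : AEval aprog env a u →
        AEval aprog (updEnv env x u) b w → AEval aprog env (.lett x a b) w
    | call {env f args params body avals w} : aprog f = some (params, body) →
        AEvalList aprog env args avals →
        AEval aprog (bindEnv params avals) body w →
        AEval aprog env (.call f args) w
    | mkCon {env c i args avals} : AEvalList aprog env args avals →
        AEval aprog env (.mkCon c i args)
          (.mk ((strOf c i).map (fun b => fun _ => b)) avals)
    | amerge {env c d bs x rs} : AEval aprog env d x →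
        AEvalBranches aprog env x bs rs →
        AEval aprog env (.amerge c d bs) (merge c x.flags rs)

  /-- Pointwise lifting of `AEval` to lists. -/
  inductive AEvalList {Name FName V : Type} [DecidableEq Name]
      (aprog : FName → Option (List Name × AExpr Name FName V)) :
      (Name → Option (AVal V)) → List (AExpr Name FName V) → List (AVal V) → Prop where
    | nil {env} : AEvalList aprog env [] []
    | cons {env e a es as} : AEval aprog env e a → AEvalList aprog env es as →
        AEvalList aprog env (e :: es) (a :: as)

  /-- Evaluation of the branches of a compiled pattern match. -/
  inductive AEvalBranches {Name FName V : Type} [DecidableEq Name]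
      (aprog : FName → Option (List Name × AExpr Name FName V)) :
      (Name → Option (AVal V)) → AVal V → List (List Name × AExpr Name FName V) →
      List (AVal V) → Prop where
    | nil {env x} : AEvalBranches aprog env x [] []
    | cons {env x pvs body r bs rs} :
        AEval aprog
          (extEnv pvs
            ((List.range pvs.length).map (fun j => x.args.getD j (AVal.mk [] [])))
            env)
          body r →
        AEvalBranches aprog env x bs rs →
        AEvalBranches aprog env x ((pvs, body) :: bs) (r :: rs)
end

/-- Pointwise decoding of an abstract environment under a typing environment `Γ` and
an assignment `σ`. -/
def decodeEnv {τ Name V : Type} (sig : Signature τ) (Γ : Name → Option τ)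
    (env : Name → Option (AVal V)) (σ : V → Bool) : Name → Option Value :=
  fun y => match Γ y, env y with
    | some T, some a => decode sig T a σ
    | _, _ => none

/-- An input expression `p` of type `T` (its free variables typed by `Γ`) is
*compiled correctly* if for every abstract environment, every assignment `σ`, every
result `a` of abstract evaluation of `compile p` and every result `v` of concrete
evaluation of `p` in the decoded environment, decoding `a` at `T` under `σ` is
defined and yields `v` — i.e. `decode (avalue (e, compile p), σ) = cvalue (decode
(e, σ), p)`. -/
def CompiledCorrectly {τ Name FName V : Type} [DecidableEq Name]
    (sig : Signature τ) (prog : FName → Option (List Name × Expr τ Name FName))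
    (aprog : FName → Option (List Name × AExpr Name FName V))
    (Γ : Name → Option τ) (p : Expr τ Name FName) (T : τ) : Prop :=
  ∀ (env : Name → Option (AVal V)) (σ : V → Bool) (a : AVal V) (v : Value),
    AEval aprog env (compile sig p) a →
    CEval prog (decodeEnv sig Γ env σ) p v →
    decode sig T a σ = some v
lemma numeric_strOf {c i : ℕ} (hi : 1 ≤ i) (hic : i ≤ c) :
    numeric c (strOf c i) = some i := by
  induction c using Nat.strong_induction_on generalizing i with
  | _ c ih =>
    match c with
    | 0 => omega
    | 1 => simp [numeric, strOf, show i = 1 by omega]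
    | n + 2 =>
      rw [strOf]
      split_ifs with h
      · rw [numeric]
        exact ih _ (by omega) hi h
      · rw [numeric, ih _ (by omega) (by omega : 1 ≤ i - (n + 2 + 1) / 2) (by omega),
          Option.map_some]
        congr 1
        omega

lemma decode_mk_strOf {V τ : Type} (sig : Signature τ) {T : τ} {i : ℕ} {argTys : List τ}
    (hi : 1 ≤ i) (hctor : (sig.ctors T)[i - 1]? = some argTys) {avals : List (AVal V)}
    (hlen : argTys.length ≤ avals.length) (σ : V → Bool) :
    decode sig T (.mk ((strOf (sig.ctors T).length i).map (fun b _ => b)) avals) σ =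
      (decodeList sig argTys avals σ).map (Value.mk i) := by
  have hic : i ≤ (sig.ctors T).length := by
    have := (List.getElem?_eq_some_iff.mp hctor).1
    omega
  rw [decode, List.map_map]
  have hconst : ((fun f => f σ) ∘ fun (b : Bool) (_ : V → Bool) => b) = id := rfl
  simp only [hconst, List.map_id, numeric_strOf hi hic, hctor, if_pos hlen]

lemma compile_con {τ Name FName V : Type} (sig : Signature τ) (T : τ) (i : ℕ)
    (ps : List (Expr τ Name FName)) :
    compile (V := V) sig (.con T i ps) =
      .mkCon (sig.ctors T).length i (ps.map (compile sig)) := by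
  rw [compile, List.map_attach_eq_pmap, List.pmap_eq_map]

lemma AEvalList.length_eq {Name FName V : Type} [DecidableEq Name]
    {aprog : FName → Option (List Name × AExpr Name FName V)}
    {env : Name → Option (AVal V)} {es : List (AExpr Name FName V)}
    {as : List (AVal V)} (h : AEvalList aprog env es as) : as.length = es.length := by
  induction es generalizing as with
  | nil => cases h; rfl
  | cons e es ih => cases h with | cons _ ht => simp [ih ht]

lemma decodeList_eq_of_forall₂_compiledCorrectly {τ Name FName V : Type} [DecidableEq Name]
    {sig : Signature τ} {prog : FName → Option (List Name × Expr τ Name FName)}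
    {aprog : FName → Option (List Name × AExpr Name FName V)}
    {Γ : Name → Option τ} {env : Name → Option (AVal V)} {σ : V → Bool}
    {ps : List (Expr τ Name FName)} {argTys : List τ} {avals : List (AVal V)}
    {vals : List Value}
    (hps : List.Forall₂ (CompiledCorrectly sig prog aprog Γ) ps argTys)
    (hA : AEvalList aprog env (ps.map (compile sig)) avals)
    (hC : CEvalList prog (decodeEnv sig Γ env σ) ps vals) :
    decodeList sig argTys avals σ = some vals := by
  induction hps generalizing avals vals with
  | nil => cases hA; cases hC; rw [decodeList]
  | cons hp _ ih =>
    cases hA with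
    | cons ha has =>
      cases hC with
      | cons hv hvs => rw [decodeList, hp env σ _ _ ha hv, ih has hvs]; rfl

/-- Correctness of compilation, constructor calls: if `C` is the `i`-th constructor
of the type `T` (with argument types `argTys`) and the argument expressions are
compiled correctly at these types, then the constructor application
`C(p_1, …, p_n)` is compiled correctly, i.e. for every abstract environment `env`
and assignment `σ`,
`decode_T (avalue (env, compile (C (p_1, …, p_n))), σ)
  = cvalue (decode (env, σ), C (p_1, …, p_n))`. -/
theorem compile_correct_con {τ Name FName V : Type} [DecidableEq Name]
    (sig : Signature τ) (prog : FName → Option (List Name × Expr τ Name FName))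
    (aprog : FName → Option (List Name × AExpr Name FName V))
    (haprog : ∀ f params body, prog f = some (params, body) →
      aprog f = some (params, compile sig body))
    (Γ : Name → Option τ) (T : τ) (i : ℕ) (argTys : List τ)
    (hi : 1 ≤ i) (hctor : (sig.ctors T)[i - 1]? = some argTys)
    (ps : List (Expr τ Name FName))
    (hps : List.Forall₂ (CompiledCorrectly sig prog aprog Γ) ps argTys) :
    CompiledCorrectly sig prog aprog Γ (.con T i ps) T := by
  intro env σ a v hA hC
  rw [compile_con] at hA
  cases hA with
  | mkCon havals =>
    cases hC with
    | con hvals =>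
      rename_i avals vals
      have hlen : argTys.length ≤ avals.length := by
        rw [havals.length_eq, List.length_map, ← hps.length_eq]
      rw [decode_mk_strOf sig hi hctor hlen,
        decodeList_eq_of_forall₂_compiledCorrectly hps havals hvals, Option.map_some]
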